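/- Let A be a primitive J(α,β)-axial algebra satisfying the (⋆) condition, generated by three primitive J(α,β)-axes a, b, c. Then A is spanned as an F-vector space by the nine elements a, b, c, [a]b, [a]c, [b]c, [a,b]c, [b,a]c, [c,a]b; in particular dim_F A ≤ 9. -/
import Mathlib


variable (F : Type*) [Field F] (A : Type*) [NonUnitalNonAssocCommRing A]
  [Module F A] [SMulCommClass F A A] [IsScalarTower F A A]

/-- The `l`-eigenspace of the left multiplication operator `ad_a`. -/
def eigSp (a : A) (l : F) : Submodule F A where
  carrier := {x | a * x = l • x}
  add_mem' := by
    intro x y hx hy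
    simp only [Set.mem_setOf_eq] at *
    rw [mul_add, hx, hy, smul_add]
  zero_mem' := by simp
  smul_mem' := by
    intro c x hx
    simp only [Set.mem_setOf_eq] at *
    rw [mul_smul_comm, hx, smul_comm]

/-- `a` is a `J(α,β)`-axis: an idempotent whose adjoint is semisimple with
eigenvalues among `1, α, β`, satisfying the fusion law `J(α,β)`. -/
structure IsJAxis (α β : F) (a : A) : Prop where
  idem : a * a = a
  decomp : eigSp F A a 1 ⊔ eigSp F A a α ⊔ eigSp F A a β = ⊤
  f11 : ∀ x ∈ eigSp F A a 1, ∀ y ∈ eigSp F A a 1, x * y ∈ eigSp F A a 1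
  f1a : ∀ x ∈ eigSp F A a 1, ∀ y ∈ eigSp F A a α, x * y ∈ eigSp F A a α
  f1b : ∀ x ∈ eigSp F A a 1, ∀ y ∈ eigSp F A a β, x * y ∈ eigSp F A a β
  faa : ∀ x ∈ eigSp F A a α, ∀ y ∈ eigSp F A a α, x * y ∈ eigSp F A a 1 ⊔ eigSp F A a α
  fab : ∀ x ∈ eigSp F A a α, ∀ y ∈ eigSp F A a β, x * y ∈ eigSp F A a β
  fbb : ∀ x ∈ eigSp F A a β, ∀ y ∈ eigSp F A a β, x * y ∈ eigSp F A a 1 ⊔ eigSp F A a α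

/-- A primitive `J(α,β)`-axis: `A_1(a) = F·a`. -/
def IsPrimJAxis (α β : F) (a : A) : Prop :=
  IsJAxis F A α β a ∧ eigSp F A a 1 = Submodule.span F {a}

/-- `A` is a primitive `J(α,β)`-axial algebra: generated as an `F`-algebra by a
set of primitive `J(α,β)`-axes. -/
def IsJAxialAlg (α β : F) : Prop :=
  ∃ S : Set A, (∀ a ∈ S, IsPrimJAxis F A α β a) ∧ NonUnitalAlgebra.adjoin F S = ⊤

/-- The `(⋆)` condition: for any two primitive axes `a, b`, writing
`b = x • a + bα + bβ`, the projection of `a` onto `A_1(b)` equals `x • b`. -/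
def StarCond (α β : F) : Prop :=
  ∀ a b : A, IsPrimJAxis F A α β a → IsPrimJAxis F A α β b →
    ∀ x : F, ∀ bα ∈ eigSp F A a α, ∀ bβ ∈ eigSp F A a β, b = x • a + bα + bβ →
      ∃ aα ∈ eigSp F A b α, ∃ aβ ∈ eigSp F A b β, a = x • b + aα + aβ

/-- A Frobenius form: a nonzero symmetric bilinear form that associates with
the product. -/
def IsFrobenius (B : A →ₗ[F] A →ₗ[F] F) : Prop :=
  B ≠ 0 ∧ (∀ u v, B u v = B v u) ∧ ∀ u v w, B u (v * w) = B (u * v) w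

/-- `τ` is the Miyamoto involution associated to the axis `a`: it fixes
`A_1(a) ⊕ A_α(a)` pointwise and negates `A_β(a)`. -/
def IsMiyamoto (α β : F) (a : A) (τ : A →ₗ[F] A) : Prop :=
  (∀ x ∈ eigSp F A a 1 ⊔ eigSp F A a α, τ x = x) ∧ ∀ x ∈ eigSp F A a β, τ x = -x

section AuxJ
set_option linter.unusedSectionVars false

variable {F A}
variable {α β : F}

theorem mem_eigSp {p x : A} {l : F} : x ∈ eigSp F A p l ↔ p * x = l • x := Iff.rfl

theorem aux_p_mem {p : A} (hp : IsPrimJAxis F A α β p) : p ∈ eigSp F A p 1 := by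
  show p * p = (1 : F) • p
  rw [one_smul, hp.1.idem]

theorem aux_decomp {p : A} (hp : IsPrimJAxis F A α β p) (x : A) :
    ∃ μ : F, ∃ y ∈ eigSp F A p α, ∃ z ∈ eigSp F A p β, x = μ • p + y + z := by
  have hx : x ∈ eigSp F A p 1 ⊔ eigSp F A p α ⊔ eigSp F A p β := by
    rw [hp.1.decomp]; exact Submodule.mem_top
  rcases Submodule.mem_sup.1 hx with ⟨s, hs, z, hz, rfl⟩
  rcases Submodule.mem_sup.1 hs with ⟨u, hu, y, hy, rfl⟩
  rw [hp.2] at hu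
  rcases Submodule.mem_span_singleton.1 hu with ⟨μ, rfl⟩
  exact ⟨μ, y, hy, z, hz, rfl⟩

theorem aux_decompEO {p : A} (hp : IsPrimJAxis F A α β p) (x : A) :
    ∃ s ∈ eigSp F A p 1 ⊔ eigSp F A p α, ∃ z ∈ eigSp F A p β, x = s + z := by
  obtain ⟨μ, y, hy, z, hz, rfl⟩ := aux_decomp hp x
  exact ⟨μ • p + y,
    Submodule.add_mem _ (Submodule.mem_sup_left (Submodule.smul_mem _ _ (aux_p_mem hp)))
      (Submodule.mem_sup_right hy), z, hz, rfl⟩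

theorem aux_tau_sz {p : A} {τ : A →ₗ[F] A} (hτ : IsMiyamoto F A α β p τ) {s z : A}
    (hs : s ∈ eigSp F A p 1 ⊔ eigSp F A p α) (hz : z ∈ eigSp F A p β) :
    τ (s + z) = s - z := by
  rw [map_add, hτ.1 s hs, hτ.2 z hz, sub_eq_add_neg]

theorem aux_tau_tau {p : A} {τ : A →ₗ[F] A} (hp : IsPrimJAxis F A α β p)
    (hτ : IsMiyamoto F A α β p τ) (x : A) : τ (τ x) = x := by
  obtain ⟨s, hs, z, hz, rfl⟩ := aux_decompEO hp x
  rw [aux_tau_sz hτ hs hz, sub_eq_add_neg, map_add, hτ.1 s hs, map_neg, hτ.2 z hz, neg_neg]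

theorem aux_mulEE {p : A} (hax : IsJAxis F A α β p) {s t : A}
    (hs : s ∈ eigSp F A p 1 ⊔ eigSp F A p α) (ht : t ∈ eigSp F A p 1 ⊔ eigSp F A p α) :
    s * t ∈ eigSp F A p 1 ⊔ eigSp F A p α := by
  rcases Submodule.mem_sup.1 hs with ⟨u, hu, v, hv, rfl⟩
  rcases Submodule.mem_sup.1 ht with ⟨u', hu', v', hv', rfl⟩
  have h : (u + v) * (u' + v') = u * u' + u * v' + (v * u' + v * v') := by
    rw [add_mul, mul_add, mul_add]
  rw [h]
  refine Submodule.add_mem _ (Submodule.add_mem _ ?_ ?_) (Submodule.add_mem _ ?_ ?_)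
  · exact Submodule.mem_sup_left (hax.f11 u hu u' hu')
  · exact Submodule.mem_sup_right (hax.f1a u hu v' hv')
  · exact Submodule.mem_sup_right (by rw [mul_comm]; exact hax.f1a u' hu' v hv)
  · exact hax.faa v hv v' hv'

theorem aux_mulEO {p : A} (hax : IsJAxis F A α β p) {s z : A}
    (hs : s ∈ eigSp F A p 1 ⊔ eigSp F A p α) (hz : z ∈ eigSp F A p β) :
    s * z ∈ eigSp F A p β := by
  rcases Submodule.mem_sup.1 hs with ⟨u, hu, v, hv, rfl⟩
  rw [add_mul]
  exact Submodule.add_mem _ (hax.f1b u hu z hz) (hax.fab v hv z hz)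

theorem aux_mulOE {p : A} (hax : IsJAxis F A α β p) {z t : A}
    (hz : z ∈ eigSp F A p β) (ht : t ∈ eigSp F A p 1 ⊔ eigSp F A p α) :
    z * t ∈ eigSp F A p β := by
  rw [mul_comm]; exact aux_mulEO hax ht hz

theorem aux_tau_mul {p : A} {τ : A →ₗ[F] A} (hp : IsPrimJAxis F A α β p)
    (hτ : IsMiyamoto F A α β p τ) (x y : A) : τ (x * y) = τ x * τ y := by
  obtain ⟨s, hs, z, hz, rfl⟩ := aux_decompEO hp x
  obtain ⟨t, ht, w, hw, rfl⟩ := aux_decompEO hp y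
  have hE : s * t + z * w ∈ eigSp F A p 1 ⊔ eigSp F A p α :=
    Submodule.add_mem _ (aux_mulEE hp.1 hs ht) (hp.1.fbb z hz w hw)
  have hO : s * w + z * t ∈ eigSp F A p β :=
    Submodule.add_mem _ (aux_mulEO hp.1 hs hw) (aux_mulOE hp.1 hz ht)
  have hxy : (s + z) * (t + w) = (s * t + z * w) + (s * w + z * t) := by
    rw [add_mul, mul_add, mul_add]; abel
  rw [hxy, map_add, hτ.1 _ hE, hτ.2 _ hO, aux_tau_sz hτ hs hz, aux_tau_sz hτ ht hw]
  rw [sub_mul, mul_sub, mul_sub]; abel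

theorem aux_key {p : A} {τ : A →ₗ[F] A} (hp : IsPrimJAxis F A α β p)
    (hτ : IsMiyamoto F A α β p τ) (x : A) :
    ∃ μ : F, (2 : F) • (p * x) =
      (2 * (μ * (1 - α))) • p + (2 * α) • x + (β - α) • (x - τ x) := by
  obtain ⟨μ, y, hy, z, hz, rfl⟩ := aux_decomp hp x
  have hpx : p * (μ • p + y + z) = μ • p + α • y + β • z := by
    rw [mul_add, mul_add, mul_smul_comm, hp.1.idem, mem_eigSp.1 hy, mem_eigSp.1 hz]
  have hτx : τ (μ • p + y + z) = μ • p + y - z := by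
    have hmem : μ • p + y ∈ eigSp F A p 1 ⊔ eigSp F A p α :=
      Submodule.add_mem _ (Submodule.mem_sup_left (Submodule.smul_mem _ _ (aux_p_mem hp)))
        (Submodule.mem_sup_right hy)
    exact aux_tau_sz hτ hmem hz
  refine ⟨μ, ?_⟩
  rw [hpx, hτx]
  module

theorem aux_mulC (h2 : (2 : F) ≠ 0) {p : A} {τ : A →ₗ[F] A} (hp : IsPrimJAxis F A α β p)
    (hτ : IsMiyamoto F A α β p τ) (x : A) :
    p * x ∈ Submodule.span F {p, x, τ x} := by
  obtain ⟨μ, hk⟩ := aux_key hp hτ x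
  have h : (2 : F) • (p * x) ∈ Submodule.span F {p, x, τ x} := by
    rw [hk]
    refine Submodule.add_mem _ (Submodule.add_mem _ (Submodule.smul_mem _ _ ?_)
      (Submodule.smul_mem _ _ ?_)) (Submodule.smul_mem _ _ (Submodule.sub_mem _ ?_ ?_)) <;>
      apply Submodule.subset_span <;> simp
  exact (Submodule.smul_mem_iff _ h2).1 h

theorem aux_tauD (hβα : β - α ≠ 0) {p : A} {τ : A →ₗ[F] A} (hp : IsPrimJAxis F A α β p)
    (hτ : IsMiyamoto F A α β p τ) (x : A) :
    τ x ∈ Submodule.span F {p, x, p * x} := by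
  obtain ⟨μ, hk⟩ := aux_key hp hτ x
  have h1 : (β - α) • (x - τ x) ∈ Submodule.span F {p, x, p * x} := by
    have e : (β - α) • (x - τ x) =
        (2 : F) • (p * x) - (2 * (μ * (1 - α))) • p - (2 * α) • x := by
      linear_combination (norm := module) -hk
    rw [e]
    refine Submodule.sub_mem _ (Submodule.sub_mem _ (Submodule.smul_mem _ _ ?_)
      (Submodule.smul_mem _ _ ?_)) (Submodule.smul_mem _ _ ?_) <;>
      apply Submodule.subset_span <;> simp
  have h2 : (β - α) • τ x ∈ Submodule.span F {p, x, p * x} := by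
    have e2 : (β - α) • τ x = (β - α) • x - (β - α) • (x - τ x) := by module
    rw [e2]
    exact Submodule.sub_mem _ (Submodule.smul_mem _ _ (Submodule.subset_span (by simp))) h1
  exact (Submodule.smul_mem_iff _ hβα).1 h2

theorem aux_mem3 {U : Submodule F A} {u v w y : A} (hu : u ∈ U) (hv : v ∈ U) (hw : w ∈ U)
    (hy : y ∈ Submodule.span F {u, v, w}) : y ∈ U := by
  have hle : Submodule.span F {u, v, w} ≤ U := by
    rw [Submodule.span_le]
    rintro x hx
    simp only [Set.mem_insert_iff, Set.mem_singleton_iff] at hx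
    rcases hx with rfl | rfl | rfl <;> assumption
  exact hle hy

theorem aux_apply3 {U : Submodule F A} (f : A →ₗ[F] A) {u v w y : A}
    (hy : y ∈ Submodule.span F {u, v, w})
    (h1 : f u ∈ U) (h2 : f v ∈ U) (h3 : f w ∈ U) : f y ∈ U := by
  have h : y ∈ U.comap f :=
    aux_mem3 (Submodule.mem_comap.2 h1) (Submodule.mem_comap.2 h2)
      (Submodule.mem_comap.2 h3) hy
  exact Submodule.mem_comap.1 h

theorem aux_mul3 {U : Submodule F A} {z u v w y : A}
    (hy : y ∈ Submodule.span F {u, v, w})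
    (h1 : z * u ∈ U) (h2 : z * v ∈ U) (h3 : z * w ∈ U) : z * y ∈ U := by
  have := aux_apply3 (LinearMap.mulLeft F z) hy (by simpa) (by simpa) (by simpa)
  simpa using this

theorem aux_mul3r {U : Submodule F A} {z u v w y : A}
    (hy : y ∈ Submodule.span F {u, v, w})
    (h1 : u * z ∈ U) (h2 : v * z ∈ U) (h3 : w * z ∈ U) : y * z ∈ U := by
  have := aux_apply3 (LinearMap.mulRight F z) hy (by simpa) (by simpa) (by simpa)
  simpa using this

theorem aux_span3_image (f : A →ₗ[F] A) {u v w y : A}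
    (hy : y ∈ Submodule.span F {u, v, w}) :
    f y ∈ Submodule.span F {f u, f v, f w} := by
  have := Submodule.apply_mem_span_image_of_mem_span f hy
  simpa [Set.image_insert_eq] using this

theorem aux_M (h2 : (2 : F) ≠ 0) {p x : A} {τ : A →ₗ[F] A} (hp : IsPrimJAxis F A α β p)
    (hτ : IsMiyamoto F A α β p τ) {U : Submodule F A}
    (hpU : p ∈ U) (hxU : x ∈ U) (htU : τ x ∈ U) : p * x ∈ U :=
  aux_mem3 hpU hxU htU (aux_mulC h2 hp hτ x)

theorem aux_T (hβα : β - α ≠ 0) {p x : A} {τ : A →ₗ[F] A} (hp : IsPrimJAxis F A α β p)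
    (hτ : IsMiyamoto F A α β p τ) {U : Submodule F A}
    (hpU : p ∈ U) (hxU : x ∈ U) (hmU : p * x ∈ U) : τ x ∈ U :=
  aux_mem3 hpU hxU hmU (aux_tauD hβα hp hτ x)

def IsGoodAut (σ : A →ₗ[F] A) : Prop :=
  (∀ x y : A, σ (x * y) = σ x * σ y) ∧ ∀ x : A, σ (σ x) = x

theorem aux_eig_iff {σ : A →ₗ[F] A} (hσ : IsGoodAut (F := F) (A := A) σ) {p : A} {l : F} {x : A} :
    x ∈ eigSp F A (σ p) l ↔ σ x ∈ eigSp F A p l := by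
  constructor
  · intro hx
    have h := congrArg σ (mem_eigSp.1 hx)
    rw [hσ.1, map_smul, hσ.2] at h
    exact h
  · intro hx
    have h := congrArg σ (mem_eigSp.1 hx)
    rw [hσ.1, map_smul, hσ.2] at h
    exact h

theorem aux_sup_iff {σ : A →ₗ[F] A} (hσ : IsGoodAut (F := F) (A := A) σ) {p : A} {l1 l2 : F} {x : A} :
    x ∈ eigSp F A (σ p) l1 ⊔ eigSp F A (σ p) l2 ↔
      σ x ∈ eigSp F A p l1 ⊔ eigSp F A p l2 := by
  constructor
  · intro hx
    rcases Submodule.mem_sup.1 hx with ⟨u, hu, v, hv, rfl⟩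
    rw [map_add]
    exact Submodule.add_mem _ (Submodule.mem_sup_left ((aux_eig_iff hσ).1 hu))
      (Submodule.mem_sup_right ((aux_eig_iff hσ).1 hv))
  · intro hx
    rcases Submodule.mem_sup.1 hx with ⟨u, hu, v, hv, h⟩
    have hxval : x = σ u + σ v := by rw [← map_add, h, hσ.2]
    rw [hxval]
    refine Submodule.add_mem _ (Submodule.mem_sup_left ((aux_eig_iff hσ).2 ?_))
      (Submodule.mem_sup_right ((aux_eig_iff hσ).2 ?_)) <;> rw [hσ.2] <;> assumption

theorem aux_transport {σ : A →ₗ[F] A} (hσ : IsGoodAut (F := F) (A := A) σ) {p : A}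
    {τ : A →ₗ[F] A} (hp : IsPrimJAxis F A α β p) (hτ : IsMiyamoto F A α β p τ) :
    IsPrimJAxis F A α β (σ p) ∧ IsMiyamoto F A α β (σ p) (σ ∘ₗ τ ∘ₗ σ) := by
  refine ⟨⟨⟨?_, ?_, ?_, ?_, ?_, ?_, ?_, ?_⟩, ?_⟩, ?_, ?_⟩
  · rw [← hσ.1, hp.1.idem]
  · rw [eq_top_iff]
    rintro x -
    have hx : σ x ∈ eigSp F A p 1 ⊔ eigSp F A p α ⊔ eigSp F A p β := by
      rw [hp.1.decomp]; exact Submodule.mem_top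
    rcases Submodule.mem_sup.1 hx with ⟨s, hs, z, hz, hszx⟩
    rcases Submodule.mem_sup.1 hs with ⟨u, hu, y, hy, rfl⟩
    have hxval : x = σ u + σ y + σ z := by
      rw [← map_add, ← map_add, hszx, hσ.2]
    rw [hxval]
    refine Submodule.add_mem _ (Submodule.mem_sup_left (Submodule.add_mem _
      (Submodule.mem_sup_left ((aux_eig_iff hσ).2 ?_))
      (Submodule.mem_sup_right ((aux_eig_iff hσ).2 ?_))))
      (Submodule.mem_sup_right ((aux_eig_iff hσ).2 ?_)) <;> rw [hσ.2] <;> assumption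
  · intro x hx y hy
    refine (aux_eig_iff hσ).2 ?_
    rw [hσ.1]
    exact hp.1.f11 _ ((aux_eig_iff hσ).1 hx) _ ((aux_eig_iff hσ).1 hy)
  · intro x hx y hy
    refine (aux_eig_iff hσ).2 ?_
    rw [hσ.1]
    exact hp.1.f1a _ ((aux_eig_iff hσ).1 hx) _ ((aux_eig_iff hσ).1 hy)
  · intro x hx y hy
    refine (aux_eig_iff hσ).2 ?_
    rw [hσ.1]
    exact hp.1.f1b _ ((aux_eig_iff hσ).1 hx) _ ((aux_eig_iff hσ).1 hy)
  · intro x hx y hy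
    refine (aux_sup_iff hσ).2 ?_
    rw [hσ.1]
    exact hp.1.faa _ ((aux_eig_iff hσ).1 hx) _ ((aux_eig_iff hσ).1 hy)
  · intro x hx y hy
    refine (aux_eig_iff hσ).2 ?_
    rw [hσ.1]
    exact hp.1.fab _ ((aux_eig_iff hσ).1 hx) _ ((aux_eig_iff hσ).1 hy)
  · intro x hx y hy
    refine (aux_sup_iff hσ).2 ?_
    rw [hσ.1]
    exact hp.1.fbb _ ((aux_eig_iff hσ).1 hx) _ ((aux_eig_iff hσ).1 hy)
  · ext x
    rw [Submodule.mem_span_singleton]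
    constructor
    · intro hx
      have h1 : σ x ∈ Submodule.span F {p} := by rw [← hp.2]; exact (aux_eig_iff hσ).1 hx
      rcases Submodule.mem_span_singleton.1 h1 with ⟨d, hd⟩
      exact ⟨d, by rw [← hσ.2 x, ← hd, map_smul]⟩
    · rintro ⟨d, rfl⟩
      refine (aux_eig_iff hσ).2 ?_
      rw [map_smul, hσ.2, hp.2]
      exact Submodule.smul_mem _ _ (Submodule.mem_span_singleton_self p)
  · intro x hx
    show σ (τ (σ x)) = x
    rw [hτ.1 (σ x) ((aux_sup_iff hσ).1 hx), hσ.2]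
  · intro x hx
    show σ (τ (σ x)) = -x
    rw [hτ.2 (σ x) ((aux_eig_iff hσ).1 hx), map_neg, hσ.2]

end AuxJ

theorem three_generated_span (α β : F) (h2 : (2 : F) ≠ 0)
    (hα1 : α ≠ 1) (hβ1 : β ≠ 1) (hαβ : α ≠ β)
    (hA : IsJAxialAlg F A α β) (hstar : StarCond F A α β)
    (a b c : A) (ha : IsPrimJAxis F A α β a) (hb : IsPrimJAxis F A α β b)
    (hc : IsPrimJAxis F A α β c)
    (hgen : NonUnitalAlgebra.adjoin F {a, b, c} = ⊤)
    (τa τb τc : A →ₗ[F] A)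
    (hτa : IsMiyamoto F A α β a τa) (hτb : IsMiyamoto F A α β b τb)
    (hτc : IsMiyamoto F A α β c τc) :
    Submodule.span F {a, b, c, τa b, τa c, τb c, τa (τb c), τb (τa c), τc (τa b)} = ⊤ ∧
    Module.finrank F A ≤ 9 := by
  have hβα : β - α ≠ 0 := sub_ne_zero_of_ne (Ne.symm hαβ)
  set S : Set A := {a, b, c, τa b, τa c, τb c, τa (τb c), τb (τa c), τc (τa b)} with hS
  set U : Submodule F A := Submodule.span F S with hUdef
  -- good automorphisms
  have gA : IsGoodAut (F := F) (A := A) τa := ⟨aux_tau_mul ha hτa, aux_tau_tau ha hτa⟩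
  have gB : IsGoodAut (F := F) (A := A) τb := ⟨aux_tau_mul hb hτb, aux_tau_tau hb hτb⟩
  have gC : IsGoodAut (F := F) (A := A) τc := ⟨aux_tau_mul hc hτc, aux_tau_tau hc hτc⟩
  -- fixed points
  have haa : τa a = a := hτa.1 a (Submodule.mem_sup_left (aux_p_mem ha))
  have hbb : τb b = b := hτb.1 b (Submodule.mem_sup_left (aux_p_mem hb))
  have hcc : τc c = c := hτc.1 c (Submodule.mem_sup_left (aux_p_mem hc))
  -- transported axes
  have h4 := aux_transport gA hb hτb   -- axis τa b, Miy τa∘τb∘τa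
  have h5 := aux_transport gA hc hτc   -- axis τa c
  have h6 := aux_transport gB hc hτc   -- axis τb c
  have hd1 := aux_transport gB ha hτa  -- axis τb a
  have hd2 := aux_transport gC ha hτa  -- axis τc a
  have hd3 := aux_transport gC hb hτb  -- axis τc b
  have hq := aux_transport gB h4.1 h4.2   -- axis τb (τa b)
  have hr := aux_transport gC h5.1 h5.2   -- axis τc (τa c)
  have hs' := aux_transport gC h6.1 h6.2  -- axis τc (τb c)
  -- generators
  have u1 : a ∈ U := Submodule.subset_span (by simp [hS])
  have u2 : b ∈ U := Submodule.subset_span (by simp [hS])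
  have u3 : c ∈ U := Submodule.subset_span (by simp [hS])
  have u4 : τa b ∈ U := Submodule.subset_span (by simp [hS])
  have u5 : τa c ∈ U := Submodule.subset_span (by simp [hS])
  have u6 : τb c ∈ U := Submodule.subset_span (by simp [hS])
  have u7 : τa (τb c) ∈ U := Submodule.subset_span (by simp [hS])
  have u8 : τb (τa c) ∈ U := Submodule.subset_span (by simp [hS])
  have u9 : τc (τa b) ∈ U := Submodule.subset_span (by simp [hS])
  -- stage 1
  have pab : a * b ∈ U := aux_M h2 ha hτa u1 u2 u4
  have pac : a * c ∈ U := aux_M h2 ha hτa u1 u3 u5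
  have pbc : b * c ∈ U := aux_M h2 hb hτb u2 u3 u6
  have tba : τb a ∈ U := aux_T hβα hb hτb u2 u1 (by rw [mul_comm]; exact pab)
  have tca : τc a ∈ U := aux_T hβα hc hτc u3 u1 (by rw [mul_comm]; exact pac)
  have tcb : τc b ∈ U := aux_T hβα hc hτc u3 u2 (by rw [mul_comm]; exact pbc)
  have pae4 : a * τa b ∈ U := aux_M h2 ha hτa u1 u4 (by rw [aux_tau_tau ha hτa]; exact u2)
  have pae5 : a * τa c ∈ U := aux_M h2 ha hτa u1 u5 (by rw [aux_tau_tau ha hτa]; exact u3)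
  have pbe6 : b * τb c ∈ U := aux_M h2 hb hτb u2 u6 (by rw [aux_tau_tau hb hτb]; exact u3)
  have pbe5 : b * τa c ∈ U := aux_M h2 hb hτb u2 u5 u8
  have pce4 : c * τa b ∈ U := aux_M h2 hc hτc u3 u4 u9
  have pae6 : a * τb c ∈ U := aux_M h2 ha hτa u1 u6 u7
  have pae7 : a * τa (τb c) ∈ U := aux_M h2 ha hτa u1 u7 (by rw [aux_tau_tau ha hτa]; exact u6)
  have pbe8 : b * τb (τa c) ∈ U := aux_M h2 hb hτb u2 u8 (by rw [aux_tau_tau hb hτb]; exact u5)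
  have pce9 : c * τc (τa b) ∈ U := aux_M h2 hc hτc u3 u9 (by rw [aux_tau_tau hc hτc]; exact u4)
  have pbtba : b * τb a ∈ U := aux_M h2 hb hτb u2 tba (by rw [aux_tau_tau hb hτb]; exact u1)
  have pctca : c * τc a ∈ U := aux_M h2 hc hτc u3 tca (by rw [aux_tau_tau hc hτc]; exact u1)
  have pctcb : c * τc b ∈ U := aux_M h2 hc hτc u3 tcb (by rw [aux_tau_tau hc hτc]; exact u2)
  -- τ of basic products
  have taab : τa (a * b) ∈ U := by rw [gA.1, haa]; exact pae4
  have taac : τa (a * c) ∈ U := by rw [gA.1, haa]; exact pae5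
  have tbab : τb (a * b) ∈ U := by rw [gB.1, hbb, mul_comm]; exact pbtba
  have tbbc : τb (b * c) ∈ U := by rw [gB.1, hbb]; exact pbe6
  have tcac : τc (a * c) ∈ U := by rw [gC.1, hcc, mul_comm]; exact pctca
  have tcbc : τc (b * c) ∈ U := by rw [gC.1, hcc, mul_comm]; exact pctcb
  -- products axis*(product of two axes)
  have pabc : a * (b * c) ∈ U := aux_mul3 (aux_mulC h2 hb hτb c) pab pac pae6
  have tabc : τa (b * c) ∈ U := aux_T hβα ha hτa u1 pbc pabc
  have pbac : b * (a * c) ∈ U :=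
    aux_mul3 (aux_mulC h2 ha hτa c) (by rw [mul_comm]; exact pab) pbc pbe5
  have tbac : τb (a * c) ∈ U := aux_T hβα hb hτb u2 pac pbac
  have pcab : c * (a * b) ∈ U :=
    aux_mul3 (aux_mulC h2 ha hτa b) (by rw [mul_comm]; exact pac)
      (by rw [mul_comm]; exact pbc) pce4
  have tcab : τc (a * b) ∈ U := aux_T hβα hc hτc u3 pab pcab
  have pbab : b * (a * b) ∈ U := aux_M h2 hb hτb u2 pab tbab
  have pbe4 : b * τa b ∈ U :=
    aux_mul3 (aux_tauD hβα ha hτa b) (by rw [mul_comm]; exact pab)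
      (by rw [hb.1.idem]; exact u2) pbab
  have pcac : c * (a * c) ∈ U := aux_M h2 hc hτc u3 pac tcac
  have pce5 : c * τa c ∈ U :=
    aux_mul3 (aux_tauD hβα ha hτa c) (by rw [mul_comm]; exact pac)
      (by rw [hc.1.idem]; exact u3) pcac
  have pcbc : c * (b * c) ∈ U := aux_M h2 hc hτc u3 pbc tcbc
  have pce6 : c * τb c ∈ U :=
    aux_mul3 (aux_tauD hβα hb hτb c) (by rw [mul_comm]; exact pbc)
      (by rw [hc.1.idem]; exact u3) pcbc
  have pbbc : b * (b * c) ∈ U := aux_M h2 hb hτb u2 pbc tbbc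
  have pe45 : τa b * τa c ∈ U := by rw [← gA.1]; exact tabc
  -- X1, X2
  have pe4c : τa b * c ∈ U := by rw [mul_comm]; exact pce4
  have X1 : τa (τb (τa c)) ∈ U := by
    have := aux_T hβα h4.1 h4.2 u4 u3 pe4c
    simpa using this
  have pe5b : τa c * b ∈ U := by rw [mul_comm]; exact pbe5
  have X2 : τa (τc (τa b)) ∈ U := by
    have := aux_T hβα h5.1 h5.2 u5 u2 pe5b
    simpa using this
  -- X3
  have X3 : τb (τa b) ∈ U := aux_T hβα hb hτb u2 u4 pbe4
  -- X4 = τb (τa (τb c))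
  have pd1c : τb a * c ∈ U :=
    aux_mul3r (aux_tauD hβα hb hτb a) pbc pac
      (by rw [mul_comm b a, mul_comm]; exact pcab)
  have X4 : τb (τa (τb c)) ∈ U := by
    have := aux_T hβα hd1.1 hd1.2 tba u3 pd1c
    simpa using this
  -- X5 = τb (τc (τa b))
  have pabe5 : (a * b) * τa c ∈ U := aux_mul3r (aux_mulC h2 ha hτa b) pae5 pbe5 pe45
  have pd1e5 : τb a * τa c ∈ U :=
    aux_mul3r (aux_tauD hβα hb hτb a) pbe5 pae5
      (by rw [mul_comm b a]; exact pabe5)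
  have X25 : τb (τa (τb (τa c))) ∈ U := by
    have := aux_T hβα hd1.1 hd1.2 tba u5 pd1e5
    simpa using this
  have pqe6 : τb (τa b) * τb c ∈ U := by
    have hspan := aux_mulC h2 hq.1 hq.2 (τb c)
    refine aux_mem3 X3 u6 ?_ hspan
    simp only [LinearMap.comp_apply]
    rw [aux_tau_tau hb hτb]
    exact X25
  have tbce4 : τb (c * τa b) ∈ U := by rw [gB.1, mul_comm]; exact pqe6
  have pbce4 : b * (c * τa b) ∈ U := aux_M h2 hb hτb u2 pce4 tbce4
  have pbe9 : b * τc (τa b) ∈ U :=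
    aux_mul3 (aux_tauD hβα hc hτc (τa b)) pbc pbe4 pbce4
  have X5 : τb (τc (τa b)) ∈ U := aux_T hβα hb hτb u2 u9 pbe9
  -- X6, X7
  have X6 : τc (τa c) ∈ U := aux_T hβα hc hτc u3 u5 pce5
  have X7 : τc (τb c) ∈ U := aux_T hβα hc hτc u3 u6 pce6
  -- X8 = τc (τb (τa c))
  have pace4 : (a * c) * τa b ∈ U :=
    aux_mul3r (aux_mulC h2 ha hτa c) pae4 pce4 (by rw [mul_comm]; exact pe45)
  have pd2e4 : τc a * τa b ∈ U :=
    aux_mul3r (aux_tauD hβα hc hτc a) pce4 pae4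
      (by rw [mul_comm c a]; exact pace4)
  have X32 : τc (τa (τc (τa b))) ∈ U := by
    have := aux_T hβα hd2.1 hd2.2 tca u4 pd2e4
    simpa using this
  have prd3 : τc (τa c) * τc b ∈ U := by
    have hspan := aux_mulC h2 hr.1 hr.2 (τc b)
    refine aux_mem3 X6 tcb ?_ hspan
    simp only [LinearMap.comp_apply]
    rw [aux_tau_tau hc hτc]
    exact X32
  have tcbe5 : τc (b * τa c) ∈ U := by rw [gC.1, mul_comm]; exact prd3
  have pcbe5 : c * (b * τa c) ∈ U := aux_M h2 hc hτc u3 pbe5 tcbe5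
  have pce8 : c * τb (τa c) ∈ U :=
    aux_mul3 (aux_tauD hβα hb hτb (τa c)) (by rw [mul_comm]; exact pbc) pce5 pcbe5
  have X8 : τc (τb (τa c)) ∈ U := aux_T hβα hc hτc u3 u8 pce8
  -- X9 = τc (τa (τb c))
  have pcd1 : c * τb a ∈ U :=
    aux_mul3 (aux_tauD hβα hb hτb a) (by rw [mul_comm]; exact pbc)
      (by rw [mul_comm]; exact pac) (by rw [mul_comm b a]; exact pcab)
  have tad1 : τa (τb a) ∈ U :=
    aux_apply3 τa (aux_tauD hβα hb hτb a) u4 (by rw [haa]; exact u1)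
      (by rw [mul_comm b a]; exact taab)
  have pae4e5 : (a * τa b) * τa c ∈ U :=
    aux_mul3r (aux_mulC h2 ha hτa (τa b)) pae5 pe45
      (by rw [aux_tau_tau ha hτa]; exact pbe5)
  have ptad1e5 : τa (τb a) * τa c ∈ U :=
    aux_mul3r (aux_span3_image τa (aux_tauD hβα hb hτb a)) pe45
      (by rw [haa]; exact pae5)
      (by rw [mul_comm b a, gA.1, haa]; exact pae4e5)
  have X42 : τa (τb (τa (τb c))) ∈ U := by
    have hy : τb (τa (τb c)) ∈ Submodule.span F {τb a, c, τb a * c} := by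
      have := aux_tauD hβα hd1.1 hd1.2 c
      simpa using this
    exact aux_apply3 τa hy tad1 u5 (by rw [gA.1]; exact ptad1e5)
  have pe46 : τa b * τb c ∈ U := by
    have hspan := aux_mulC h2 h4.1 h4.2 (τb c)
    refine aux_mem3 u4 u6 ?_ hspan
    simpa using X42
  have pe4bc : τa b * (b * c) ∈ U :=
    aux_mul3 (aux_mulC h2 hb hτb c) (by rw [mul_comm]; exact pbe4) pe4c pe46
  have pabbc : (a * b) * (b * c) ∈ U :=
    aux_mul3r (aux_mulC h2 ha hτa b) pabc pbbc pe4bc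
  have pbcd1 : (b * c) * τb a ∈ U :=
    aux_mul3 (aux_tauD hβα hb hτb a) (by rw [mul_comm]; exact pbbc)
      (by rw [mul_comm]; exact pabc)
      (by rw [mul_comm b a, mul_comm]; exact pabbc)
  have pd3d1 : τc b * τb a ∈ U :=
    aux_mul3r (aux_tauD hβα hc hτc b) pcd1 pbtba
      (by rw [mul_comm c b]; exact pbcd1)
  have X48 : τc (τb (τc (τb a))) ∈ U := by
    have := aux_T hβα hd3.1 hd3.2 tcb tba pd3d1
    simpa using this
  have psd2 : τc (τb c) * τc a ∈ U := by
    have hspan := aux_mulC h2 hs'.1 hs'.2 (τc a)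
    refine aux_mem3 X7 tca ?_ hspan
    simp only [LinearMap.comp_apply]
    rw [aux_tau_tau hc hτc]
    exact X48
  have tcae6 : τc (a * τb c) ∈ U := by rw [gC.1, mul_comm]; exact psd2
  have pcae6 : c * (a * τb c) ∈ U := aux_M h2 hc hτc u3 pae6 tcae6
  have pce7 : c * τa (τb c) ∈ U :=
    aux_mul3 (aux_tauD hβα ha hτa (τb c)) (by rw [mul_comm]; exact pac) pce6 pcae6
  have X9 : τc (τa (τb c)) ∈ U := aux_T hβα hc hτc u3 u7 pce7
  -- τ-invariance of U
  have hSle : ∀ (f : A →ₗ[F] A), (∀ x ∈ S, f x ∈ U) → ∀ {x : A}, x ∈ U → f x ∈ U := by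
    intro f hf x hx
    have hle : U ≤ U.comap f := by
      rw [hUdef, Submodule.span_le]
      intro y hy
      exact Submodule.mem_comap.2 (hf y hy)
    exact Submodule.mem_comap.1 (hle hx)
  have hSmem : ∀ {P : A → Prop}, P a → P b → P c → P (τa b) → P (τa c) → P (τb c) →
      P (τa (τb c)) → P (τb (τa c)) → P (τc (τa b)) → ∀ x ∈ S, P x := by
    intro P p1 p2 p3 p4 p5 p6 p7 p8 p9 x hx
    simp only [hS, Set.mem_insert_iff, Set.mem_singleton_iff] at hx
    rcases hx with rfl | rfl | rfl | rfl | rfl | rfl | rfl | rfl | rfl <;> assumption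
  have hτaU : ∀ {x : A}, x ∈ U → τa x ∈ U := by
    refine hSle τa (hSmem ?_ ?_ ?_ ?_ ?_ ?_ ?_ ?_ ?_)
    · rw [haa]; exact u1
    · exact u4
    · exact u5
    · rw [aux_tau_tau ha hτa]; exact u2
    · rw [aux_tau_tau ha hτa]; exact u3
    · exact u7
    · rw [aux_tau_tau ha hτa]; exact u6
    · exact X1
    · exact X2
  have hτbU : ∀ {x : A}, x ∈ U → τb x ∈ U := by
    refine hSle τb (hSmem ?_ ?_ ?_ ?_ ?_ ?_ ?_ ?_ ?_)
    · exact tba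
    · rw [hbb]; exact u2
    · exact u6
    · exact X3
    · exact u8
    · rw [aux_tau_tau hb hτb]; exact u3
    · exact X4
    · rw [aux_tau_tau hb hτb]; exact u5
    · exact X5
  have hτcU : ∀ {x : A}, x ∈ U → τc x ∈ U := by
    refine hSle τc (hSmem ?_ ?_ ?_ ?_ ?_ ?_ ?_ ?_ ?_)
    · exact tca
    · exact tcb
    · rw [hcc]; exact u3
    · exact u9
    · exact X6
    · exact X7
    · exact X9
    · exact X8
    · rw [aux_tau_tau hc hτc]; exact u4
  -- multiplication rows
  have rowa : ∀ x ∈ U, a * x ∈ U := fun x hx => aux_M h2 ha hτa u1 hx (hτaU hx)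
  have rowb : ∀ x ∈ U, b * x ∈ U := fun x hx => aux_M h2 hb hτb u2 hx (hτbU hx)
  have rowc : ∀ x ∈ U, c * x ∈ U := fun x hx => aux_M h2 hc hτc u3 hx (hτcU hx)
  have rowe4 : ∀ x ∈ U, τa b * x ∈ U := by
    intro x hx
    have h3 : τa (b * τa x) ∈ U := hτaU (rowb _ (hτaU hx))
    have he : τa (b * τa x) = τa b * x := by rw [gA.1, aux_tau_tau ha hτa]
    rwa [he] at h3
  have rowe5 : ∀ x ∈ U, τa c * x ∈ U := by
    intro x hx
    have h3 : τa (c * τa x) ∈ U := hτaU (rowc _ (hτaU hx))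
    have he : τa (c * τa x) = τa c * x := by rw [gA.1, aux_tau_tau ha hτa]
    rwa [he] at h3
  have rowe6 : ∀ x ∈ U, τb c * x ∈ U := by
    intro x hx
    have h3 : τb (c * τb x) ∈ U := hτbU (rowc _ (hτbU hx))
    have he : τb (c * τb x) = τb c * x := by rw [gB.1, aux_tau_tau hb hτb]
    rwa [he] at h3
  have rowe7 : ∀ x ∈ U, τa (τb c) * x ∈ U := by
    intro x hx
    have h3 : τa (τb c * τa x) ∈ U := hτaU (rowe6 _ (hτaU hx))
    have he : τa (τb c * τa x) = τa (τb c) * x := by rw [gA.1, aux_tau_tau ha hτa]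
    rwa [he] at h3
  have rowe8 : ∀ x ∈ U, τb (τa c) * x ∈ U := by
    intro x hx
    have h3 : τb (τa c * τb x) ∈ U := hτbU (rowe5 _ (hτbU hx))
    have he : τb (τa c * τb x) = τb (τa c) * x := by rw [gB.1, aux_tau_tau hb hτb]
    rwa [he] at h3
  have rowe9 : ∀ x ∈ U, τc (τa b) * x ∈ U := by
    intro x hx
    have h3 : τc (τa b * τc x) ∈ U := hτcU (rowe4 _ (hτcU hx))
    have he : τc (τa b * τc x) = τc (τa b) * x := by rw [gC.1, aux_tau_tau hc hτc]
    rwa [he] at h3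
  -- closure
  have hmul : ∀ x y : A, x ∈ U → y ∈ U → x * y ∈ U := by
    intro x y hx hy
    induction hx using Submodule.span_induction with
    | mem s hsS =>
      refine hSmem (P := fun t => t * y ∈ U) ?_ ?_ ?_ ?_ ?_ ?_ ?_ ?_ ?_ s hsS
      · exact rowa y hy
      · exact rowb y hy
      · exact rowc y hy
      · exact rowe4 y hy
      · exact rowe5 y hy
      · exact rowe6 y hy
      · exact rowe7 y hy
      · exact rowe8 y hy
      · exact rowe9 y hy
    | zero => rw [zero_mul]; exact Submodule.zero_mem U
    | add x1 x2 hx1 hx2 ih1 ih2 => rw [add_mul]; exact Submodule.add_mem _ ih1 ih2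
    | smul t x1 hx1 ih => rw [smul_mul_assoc]; exact Submodule.smul_mem _ _ ih
  -- conclusion
  have hUtop : U = ⊤ := by
    have hsub : NonUnitalAlgebra.adjoin F {a, b, c} ≤ U.toNonUnitalSubalgebra hmul := by
      apply NonUnitalAlgebra.adjoin_le
      intro x hx
      simp only [Set.mem_insert_iff, Set.mem_singleton_iff] at hx
      rcases hx with rfl | rfl | rfl
      · exact Submodule.mem_toNonUnitalSubalgebra.2 u1
      · exact Submodule.mem_toNonUnitalSubalgebra.2 u2
      · exact Submodule.mem_toNonUnitalSubalgebra.2 u3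
    rw [hgen] at hsub
    rw [eq_top_iff]
    intro x _
    exact Submodule.mem_toNonUnitalSubalgebra.1 (hsub (by trivial))
  refine ⟨hUtop, ?_⟩
  classical
  have hfin : Module.finrank F A = Module.finrank F U := by
    rw [hUtop, finrank_top]
  rw [hfin]
  have hSeq : S = (↑({a, b, c, τa b, τa c, τb c, τa (τb c), τb (τa c), τc (τa b)} : Finset A) : Set A) := by
    simp [hS]
  rw [hUdef, hSeq]
  refine le_trans (finrank_span_finset_le_card _) ?_
  refine le_trans (Finset.card_insert_le _ _) (Nat.succ_le_succ ?_)
  refine le_trans (Finset.card_insert_le _ _) (Nat.succ_le_succ ?_)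
  refine le_trans (Finset.card_insert_le _ _) (Nat.succ_le_succ ?_)
  refine le_trans (Finset.card_insert_le _ _) (Nat.succ_le_succ ?_)
  refine le_trans (Finset.card_insert_le _ _) (Nat.succ_le_succ ?_)
  refine le_trans (Finset.card_insert_le _ _) (Nat.succ_le_succ ?_)
  refine le_trans (Finset.card_insert_le _ _) (Nat.succ_le_succ ?_)
  refine le_trans (Finset.card_insert_le _ _) (Nat.succ_le_succ ?_)
  simp
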